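/- Let G be a connected simple graph of order n with diam(G) = 2 and β(G) = n − 3, with twin graph G*, and let v be a vertex of G such that Γ_2^*(v^*) ≠ ∅ and Γ_1(v) is homogeneous. If |R_1^*(v^*)| = 2 and Γ_2(v) is homogeneous, then G* satisfies one of the structures G_4, G_5, G_6 or G_7. Structure G_4: G* ≅ C_5 and every vertex is of type (1). Structure G_5: G* is C_5 with one chord, the two adjacent degree-2 vertices are of type (1) and the other vertices are of type (1K). Structure G_6: G* is C_5 with two adjacent chords (so G* has one degree-4 vertex), the degree-4 vertex is of any type and the other vertices are of type (1K); moreover, no two non-adjacent vertices are both of type (K), and no two adjacent vertices are of different types (K) and (N). Structure G_7: G* is the kite (K_4 minus an edge) with a pendant edge attached to a degree-3 vertex; the leaf is of type (1), the degree-4 and degree-3 vertices are of type (1K), one degree-2 vertex is of type (K) and the other degree-2 vertex is of type (1). -/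

import Mathlib

namespace PaperMetricDim

open SimpleGraph

variable {V : Type*}

/-- A set `W` of vertices resolves the graph `G`: any two distinct vertices have
different distance to some vertex of `W`. -/
def Resolves (G : SimpleGraph V) (W : Set V) : Prop :=
  ∀ u v : V, u ≠ v → ∃ w ∈ W, G.dist u w ≠ G.dist v w

/-- The metric dimension of `G`: the minimum cardinality of a resolving set. -/
noncomputable def metricDim (G : SimpleGraph V) : ℕ :=
  sInf {k : ℕ | ∃ W : Set V, Resolves G W ∧ W.ncard = k}

/-- `G` is connected and has diameter exactly `d`. -/
def diamEq (G : SimpleGraph V) (d : ℕ) : Prop :=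
  G.Connected ∧ (∀ u v : V, G.dist u v ≤ d) ∧ ∃ u v : V, G.dist u v = d

/-- A set of vertices is homogeneous if it induces a complete or an empty subgraph. -/
def Homogeneous (G : SimpleGraph V) (S : Set V) : Prop :=
  (∀ a ∈ S, ∀ b ∈ S, a ≠ b → G.Adj a b) ∨ (∀ a ∈ S, ∀ b ∈ S, ¬ G.Adj a b)

/-- Two distinct vertices are twins: they have the same neighbours apart from
each other. -/
def Twins (G : SimpleGraph V) (u v : V) : Prop :=
  u ≠ v ∧ G.neighborSet u \ {v} = G.neighborSet v \ {u}

/-- The twin equivalence relation: equal or twins. -/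
def twinRel (G : SimpleGraph V) (u v : V) : Prop := u = v ∨ Twins G u v

/-- The twin class of a vertex. -/
def twinClass (G : SimpleGraph V) (v : V) : Set V := {u : V | twinRel G v u}

/-- The vertices of the twin graph: twin equivalence classes. -/
def TwinVertex (G : SimpleGraph V) : Type _ := {S : Set V // ∃ v : V, S = twinClass G v}

/-- The twin graph `G*` of `G`: twin classes, two distinct classes being
adjacent iff (some, equivalently all) representatives are adjacent in `G`. -/
def twinGraph (G : SimpleGraph V) : SimpleGraph (TwinVertex G) where
  Adj A B := A ≠ B ∧ ∃ a ∈ A.1, ∃ b ∈ B.1, G.Adj a b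
  symm := by
    constructor
    rintro A B ⟨hne, a, ha, b, hb, hab⟩
    exact ⟨hne.symm, b, hb, a, ha, hab.symm⟩
  loopless := by constructor; rintro A ⟨hne, -⟩; exact hne rfl

/-- The twin class of `v`, as a vertex of the twin graph. -/
def cls (G : SimpleGraph V) (v : V) : TwinVertex G := ⟨twinClass G v, v, rfl⟩

/-- A twin-graph vertex of type (1): a singleton class. -/
def typeOne (G : SimpleGraph V) (A : TwinVertex G) : Prop := ∃ v : V, A.1 = {v}

/-- A twin-graph vertex of type (K): a class with at least two vertices inducing
a complete subgraph. -/
def typeK (G : SimpleGraph V) (A : TwinVertex G) : Prop :=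
  A.1.Nontrivial ∧ ∀ a ∈ A.1, ∀ b ∈ A.1, a ≠ b → G.Adj a b

/-- A twin-graph vertex of type (N): a class with at least two vertices inducing
an empty subgraph. -/
def typeN (G : SimpleGraph V) (A : TwinVertex G) : Prop :=
  A.1.Nontrivial ∧ ∀ a ∈ A.1, ∀ b ∈ A.1, ¬ G.Adj a b

/-- Type (1K): type (1) or type (K). -/
def type1K (G : SimpleGraph V) (A : TwinVertex G) : Prop := typeOne G A ∨ typeK G A

/-- Type (1N): type (1) or type (N). -/
def type1N (G : SimpleGraph V) (A : TwinVertex G) : Prop := typeOne G A ∨ typeN G A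

/-- Type (KN): type (K) or type (N). -/
def typeKN (G : SimpleGraph V) (A : TwinVertex G) : Prop := typeK G A ∨ typeN G A

/-- `Γ_i(v)`: the set of vertices at distance `i` from `v`. -/
def Gamma (G : SimpleGraph V) (i : ℕ) (v : V) : Set V := {u : V | G.dist u v = i}

/-- `Γ_i^*(v^*)`: the set of twin-graph vertices at distance `i` from `v^*`. -/
def GammaStar (G : SimpleGraph V) (i : ℕ) (v : V) : Set (TwinVertex G) :=
  {A : TwinVertex G | (twinGraph G).dist A (cls G v) = i}

/-- `R_1(v)`: neighbours of `v` having a neighbour at distance 2 from `v`. -/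
def R1 (G : SimpleGraph V) (v : V) : Set V :=
  {x ∈ Gamma G 1 v | ∃ y ∈ Gamma G 2 v, G.Adj x y}

/-- `R_2(v) = Γ_1(v) \ R_1(v)`. -/
def R2 (G : SimpleGraph V) (v : V) : Set V := Gamma G 1 v \ R1 G v

/-- `R_1^*(v^*)`: twin-graph neighbours of `v^*` having a neighbour in `Γ_2^*(v^*)`. -/
def R1Star (G : SimpleGraph V) (v : V) : Set (TwinVertex G) :=
  {A ∈ GammaStar G 1 v | ∃ B ∈ GammaStar G 2 v, (twinGraph G).Adj A B}

/-- `R_2^*(v^*) = Γ_1^*(v^*) \ R_1^*(v^*)`. -/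
def R2Star (G : SimpleGraph V) (v : V) : Set (TwinVertex G) :=
  GammaStar G 1 v \ R1Star G v

/-- `M_1(x) = Γ_1(v) ∩ Γ_1(x)` (for `x ∈ Γ_1(v)`). -/
def M1 (G : SimpleGraph V) (v x : V) : Set V := Gamma G 1 v ∩ Gamma G 1 x

/-- `M_2(x) = Γ_1(v) ∩ Γ_2(x)` (for `x ∈ Γ_1(v)`). -/
def M2 (G : SimpleGraph V) (v x : V) : Set V := Gamma G 1 v ∩ Gamma G 2 x

/-- Structure `G_1`: the twin graph is `K_3` and has at most one vertex of type (1K). -/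
def structG1 (G : SimpleGraph V) : Prop :=
  ∃ a b c : TwinVertex G, a ≠ b ∧ a ≠ c ∧ b ≠ c ∧
    (∀ X : TwinVertex G, X = a ∨ X = b ∨ X = c) ∧
    (twinGraph G).Adj a b ∧ (twinGraph G).Adj a c ∧ (twinGraph G).Adj b c ∧
    (∀ X Y : TwinVertex G, type1K G X → type1K G Y → X = Y)

/-- Structure `G_2`: the twin graph is the path `P_3` with (a) centre of type (N)
and some leaf of type (K), or (b) one leaf of type (K) and the other of type (KN). -/
def structG2 (G : SimpleGraph V) : Prop :=
  ∃ a b c : TwinVertex G, a ≠ b ∧ a ≠ c ∧ b ≠ c ∧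
    (∀ X : TwinVertex G, X = a ∨ X = b ∨ X = c) ∧
    (twinGraph G).Adj a b ∧ (twinGraph G).Adj b c ∧ ¬ (twinGraph G).Adj a c ∧
    ((typeN G b ∧ (typeK G a ∨ typeK G c)) ∨
     (typeK G a ∧ typeKN G c) ∨ (typeK G c ∧ typeKN G a))

/-- Structure `G_3`: the twin graph is the paw, the triangle being `u, p, q` with
the pendant vertex `l` attached to `u`; `p` is of type (N), `q` of type (1K),
`l` of type (1N); and if `q` is of type (K) then neither `l` nor `u` is of type (N). -/
def structG3 (G : SimpleGraph V) : Prop :=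
  ∃ u p q l : TwinVertex G,
    u ≠ p ∧ u ≠ q ∧ u ≠ l ∧ p ≠ q ∧ p ≠ l ∧ q ≠ l ∧
    (∀ X : TwinVertex G, X = u ∨ X = p ∨ X = q ∨ X = l) ∧
    (twinGraph G).Adj u p ∧ (twinGraph G).Adj u q ∧ (twinGraph G).Adj p q ∧
    (twinGraph G).Adj u l ∧ ¬ (twinGraph G).Adj p l ∧ ¬ (twinGraph G).Adj q l ∧
    typeN G p ∧ type1K G q ∧ type1N G l ∧
    (typeK G q → ¬ typeN G l ∧ ¬ typeN G u)

/-- Structure `G_4`: the twin graph is the cycle `C_5` and every vertex is of type (1). -/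
def structG4 (G : SimpleGraph V) : Prop :=
  ∃ v0 v1 v2 v3 v4 : TwinVertex G,
    v0 ≠ v1 ∧ v0 ≠ v2 ∧ v0 ≠ v3 ∧ v0 ≠ v4 ∧ v1 ≠ v2 ∧ v1 ≠ v3 ∧ v1 ≠ v4 ∧
    v2 ≠ v3 ∧ v2 ≠ v4 ∧ v3 ≠ v4 ∧
    (∀ X : TwinVertex G, X = v0 ∨ X = v1 ∨ X = v2 ∨ X = v3 ∨ X = v4) ∧
    (twinGraph G).Adj v0 v1 ∧ (twinGraph G).Adj v1 v2 ∧ (twinGraph G).Adj v2 v3 ∧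
    (twinGraph G).Adj v3 v4 ∧ (twinGraph G).Adj v4 v0 ∧
    ¬ (twinGraph G).Adj v0 v2 ∧ ¬ (twinGraph G).Adj v1 v3 ∧ ¬ (twinGraph G).Adj v2 v4 ∧
    ¬ (twinGraph G).Adj v3 v0 ∧ ¬ (twinGraph G).Adj v4 v1 ∧
    (∀ X : TwinVertex G, typeOne G X)

/-- Structure `G_5`: the twin graph is `C_5` with one chord (cycle `v0 v1 v2 v3 v4`,
chord `v0 v2`); the two adjacent degree-2 vertices `v3, v4` are of type (1), the
other vertices of type (1K). -/
def structG5 (G : SimpleGraph V) : Prop :=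
  ∃ v0 v1 v2 v3 v4 : TwinVertex G,
    v0 ≠ v1 ∧ v0 ≠ v2 ∧ v0 ≠ v3 ∧ v0 ≠ v4 ∧ v1 ≠ v2 ∧ v1 ≠ v3 ∧ v1 ≠ v4 ∧
    v2 ≠ v3 ∧ v2 ≠ v4 ∧ v3 ≠ v4 ∧
    (∀ X : TwinVertex G, X = v0 ∨ X = v1 ∨ X = v2 ∨ X = v3 ∨ X = v4) ∧
    (twinGraph G).Adj v0 v1 ∧ (twinGraph G).Adj v1 v2 ∧ (twinGraph G).Adj v2 v3 ∧
    (twinGraph G).Adj v3 v4 ∧ (twinGraph G).Adj v4 v0 ∧ (twinGraph G).Adj v0 v2 ∧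
    ¬ (twinGraph G).Adj v1 v3 ∧ ¬ (twinGraph G).Adj v1 v4 ∧ ¬ (twinGraph G).Adj v2 v4 ∧
    typeOne G v3 ∧ typeOne G v4 ∧ type1K G v0 ∧ type1K G v1 ∧ type1K G v2

/-- Structure `G_6`: the twin graph is `C_5` with two adjacent chords (cycle
`v0 v1 v2 v3 v4`, chords `v0 v2` and `v0 v3`, so `v0` has degree 4); `v0` is of any
type, the other vertices of type (1K); no two non-adjacent vertices are both of
type (K), and no two adjacent vertices have the different types (K) and (N). -/
def structG6 (G : SimpleGraph V) : Prop :=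
  ∃ v0 v1 v2 v3 v4 : TwinVertex G,
    v0 ≠ v1 ∧ v0 ≠ v2 ∧ v0 ≠ v3 ∧ v0 ≠ v4 ∧ v1 ≠ v2 ∧ v1 ≠ v3 ∧ v1 ≠ v4 ∧
    v2 ≠ v3 ∧ v2 ≠ v4 ∧ v3 ≠ v4 ∧
    (∀ X : TwinVertex G, X = v0 ∨ X = v1 ∨ X = v2 ∨ X = v3 ∨ X = v4) ∧
    (twinGraph G).Adj v0 v1 ∧ (twinGraph G).Adj v1 v2 ∧ (twinGraph G).Adj v2 v3 ∧
    (twinGraph G).Adj v3 v4 ∧ (twinGraph G).Adj v4 v0 ∧ (twinGraph G).Adj v0 v2 ∧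
    (twinGraph G).Adj v0 v3 ∧
    ¬ (twinGraph G).Adj v1 v3 ∧ ¬ (twinGraph G).Adj v1 v4 ∧ ¬ (twinGraph G).Adj v2 v4 ∧
    type1K G v1 ∧ type1K G v2 ∧ type1K G v3 ∧ type1K G v4 ∧
    (∀ X Y : TwinVertex G, X ≠ Y → ¬ (twinGraph G).Adj X Y →
      ¬ (typeK G X ∧ typeK G Y)) ∧
    (∀ X Y : TwinVertex G, (twinGraph G).Adj X Y → ¬ (typeK G X ∧ typeN G Y))

/-- Structure `G_7`: the twin graph is the kite (`K_4` minus an edge, vertices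
`a, b` of degree 3 in the kite and `c, d` the non-adjacent pair) with a pendant
vertex `l` attached to the degree-3 vertex `a`; `l` is of type (1), `a` and `b`
are of type (1K), one of `c, d` is of type (K) and the other of type (1). -/
def structG7 (G : SimpleGraph V) : Prop :=
  ∃ a b c d l : TwinVertex G,
    a ≠ b ∧ a ≠ c ∧ a ≠ d ∧ a ≠ l ∧ b ≠ c ∧ b ≠ d ∧ b ≠ l ∧ c ≠ d ∧ c ≠ l ∧ d ≠ l ∧
    (∀ X : TwinVertex G, X = a ∨ X = b ∨ X = c ∨ X = d ∨ X = l) ∧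
    (twinGraph G).Adj a b ∧ (twinGraph G).Adj a c ∧ (twinGraph G).Adj a d ∧
    (twinGraph G).Adj b c ∧ (twinGraph G).Adj b d ∧ (twinGraph G).Adj a l ∧
    ¬ (twinGraph G).Adj c d ∧ ¬ (twinGraph G).Adj b l ∧ ¬ (twinGraph G).Adj c l ∧
    ¬ (twinGraph G).Adj d l ∧
    typeOne G l ∧ type1K G a ∧ type1K G b ∧ typeK G c ∧ typeOne G d

/-- Structure `G_8`: the twin graph is the kite (`K_4` minus an edge, `a, b` of
degree 3 and `c, d` the non-adjacent degree-2 pair); one degree-2 vertex `c` is of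
type (K) and the other `d` of type (1); one degree-3 vertex `a` is of type (N)
and the other `b` of type (1K). -/
def structG8 (G : SimpleGraph V) : Prop :=
  ∃ a b c d : TwinVertex G,
    a ≠ b ∧ a ≠ c ∧ a ≠ d ∧ b ≠ c ∧ b ≠ d ∧ c ≠ d ∧
    (∀ X : TwinVertex G, X = a ∨ X = b ∨ X = c ∨ X = d) ∧
    (twinGraph G).Adj a b ∧ (twinGraph G).Adj a c ∧ (twinGraph G).Adj a d ∧
    (twinGraph G).Adj b c ∧ (twinGraph G).Adj b d ∧ ¬ (twinGraph G).Adj c d ∧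
    typeN G a ∧ type1K G b ∧ typeK G c ∧ typeOne G d

/-- Structure `G_9`: the twin graph is `C_4`, two adjacent vertices of type (K)
and the other two of type (1). -/
def structG9 (G : SimpleGraph V) : Prop :=
  ∃ v0 v1 v2 v3 : TwinVertex G,
    v0 ≠ v1 ∧ v0 ≠ v2 ∧ v0 ≠ v3 ∧ v1 ≠ v2 ∧ v1 ≠ v3 ∧ v2 ≠ v3 ∧
    (∀ X : TwinVertex G, X = v0 ∨ X = v1 ∨ X = v2 ∨ X = v3) ∧
    (twinGraph G).Adj v0 v1 ∧ (twinGraph G).Adj v1 v2 ∧ (twinGraph G).Adj v2 v3 ∧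
    (twinGraph G).Adj v3 v0 ∧ ¬ (twinGraph G).Adj v0 v2 ∧ ¬ (twinGraph G).Adj v1 v3 ∧
    typeK G v0 ∧ typeK G v1 ∧ typeOne G v2 ∧ typeOne G v3

/-- Structure `G_10`: the twin graph is the wheel `C_4 ∨ K_1` (hub `h`, rim
`v0 v1 v2 v3`); two adjacent rim (degree-3) vertices `v0, v1` are of type (K), the
hub is of type (1K), and the other vertices of type (1). -/
def structG10 (G : SimpleGraph V) : Prop :=
  ∃ h v0 v1 v2 v3 : TwinVertex G,
    h ≠ v0 ∧ h ≠ v1 ∧ h ≠ v2 ∧ h ≠ v3 ∧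
    v0 ≠ v1 ∧ v0 ≠ v2 ∧ v0 ≠ v3 ∧ v1 ≠ v2 ∧ v1 ≠ v3 ∧ v2 ≠ v3 ∧
    (∀ X : TwinVertex G, X = h ∨ X = v0 ∨ X = v1 ∨ X = v2 ∨ X = v3) ∧
    (twinGraph G).Adj h v0 ∧ (twinGraph G).Adj h v1 ∧ (twinGraph G).Adj h v2 ∧
    (twinGraph G).Adj h v3 ∧
    (twinGraph G).Adj v0 v1 ∧ (twinGraph G).Adj v1 v2 ∧ (twinGraph G).Adj v2 v3 ∧
    (twinGraph G).Adj v3 v0 ∧ ¬ (twinGraph G).Adj v0 v2 ∧ ¬ (twinGraph G).Adj v1 v3 ∧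
    typeK G v0 ∧ typeK G v1 ∧ type1K G h ∧ typeOne G v2 ∧ typeOne G v3

/-!
Since `β(G) = n - 3`, no four vertices `a, b, c, d` are pairwise separated by vertices outside
`{a, b, c, d}`, a pair being separated by a vertex adjacent to exactly one of its members:
otherwise the other `n - 4` vertices would resolve `G`. The proof consists in applying this to
suitable quadruples.

Let `R₁*(v*) = {x*, y*}` and call `b` far when `b* ∈ Γ₂*(v*)`. Every far vertex is adjacent
to `x` or `y`, and two far vertices with the same neighbours among `x, y` are twins. As `x, y`
are not twins, up to symmetry some far `p` is adjacent to `x` only. If a far `r` is adjacent to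
both, then no far vertex is adjacent to `y` only, and the twin graph is `G₆`, `G₅` or `G₇` on
`x, p, r, y, v` according as `Γ₁(v)` and `Γ₂(v)` are complete or empty. Otherwise a far `q` is
adjacent to `y` only, `Γ₂(v)` is complete, and the twin graph is `G₅` or `G₄` on
`x, v, y, q, p`.
-/

section Twins

variable {G : SimpleGraph V} {u w z t : V}

theorem twinRel_iff :
    twinRel G u w ↔ ∀ t, t ≠ u → t ≠ w → (G.Adj u t ↔ G.Adj w t) := by
  constructor
  · rintro (rfl | ⟨-, h⟩) t htu htw
    · rfl
    · have : t ∈ G.neighborSet u \ {w} ↔ t ∈ G.neighborSet w \ {u} := by rw [h]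
      simpa [htu, htw] using this
  · intro h
    by_cases huw : u = w
    · exact Or.inl huw
    refine Or.inr ⟨huw, Set.ext fun t => ?_⟩
    simp only [Set.mem_sdiff, mem_neighborSet, Set.mem_singleton_iff]
    constructor
    · rintro ⟨ht, htw⟩
      exact ⟨(h t (G.ne_of_adj ht).symm htw).1 ht, (G.ne_of_adj ht).symm⟩
    · rintro ⟨ht, htu⟩
      exact ⟨(h t htu (G.ne_of_adj ht).symm).2 ht, (G.ne_of_adj ht).symm⟩

namespace twinRel

theorem refl (u : V) : twinRel G u u := Or.inl rfl

theorem adj_iff (h : twinRel G u w) (htu : t ≠ u) (htw : t ≠ w) : G.Adj u t ↔ G.Adj w t :=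
  twinRel_iff.1 h t htu htw

theorem symm (h : twinRel G u w) : twinRel G w u :=
  twinRel_iff.2 fun _ htw htu => (h.adj_iff htu htw).symm

theorem trans (h₁ : twinRel G u w) (h₂ : twinRel G w z) : twinRel G u z := by
  refine twinRel_iff.2 fun t htu htz => ?_
  rcases eq_or_ne t w with rfl | htw
  · rcases eq_or_ne u z with rfl | huz
    · rfl
    exact (G.adj_comm u t).trans <| (h₂.adj_iff htu.symm huz).trans <| (G.adj_comm z u).trans <|
      (h₁.adj_iff huz.symm htz.symm).trans (G.adj_comm t z)
  · exact (h₁.adj_iff htu htw).trans (h₂.adj_iff htw htz)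

theorem adj_right (h : twinRel G u w) (ht : G.Adj t u) (htw : t ≠ w) : G.Adj t w :=
  ((h.adj_iff (G.ne_of_adj ht) htw).1 ht.symm).symm

theorem not_adj_right (h : twinRel G u w) (ht : ¬ G.Adj t u) (htu : t ≠ u) : ¬ G.Adj t w :=
  fun h' => ht (h.symm.adj_right h' htu)

end twinRel

theorem not_twinRel_of_adj (hu : G.Adj u t) (hw : ¬ G.Adj w t) (htw : t ≠ w) :
    ¬ twinRel G u w :=
  fun h => hw ((h.adj_iff (G.ne_of_adj hu).symm htw).1 hu)

theorem not_twinRel_of_not_adj (hu : ¬ G.Adj u t) (hw : G.Adj w t) (htu : t ≠ u) :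
    ¬ twinRel G u w :=
  fun h => not_twinRel_of_adj hw hu htu h.symm

theorem cls_eq_cls : cls G u = cls G w ↔ twinRel G u w := by
  refine ⟨fun h => ?_, fun h => Subtype.ext (Set.ext fun t => ⟨h.symm.trans, h.trans⟩)⟩
  have : w ∈ (cls G w).1 := twinRel.refl w
  rwa [← h] at this

theorem cls_surjective : Function.Surjective (cls G) := by
  rintro ⟨S, u, rfl⟩
  exact ⟨u, rfl⟩

theorem twinGraph_adj_cls :
    (twinGraph G).Adj (cls G u) (cls G w) ↔ ¬ twinRel G u w ∧ G.Adj u w := by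
  refine ⟨fun ⟨hne, a, ha, b, hb, hab⟩ => ⟨mt cls_eq_cls.2 hne, ?_⟩,
    fun ⟨h, huw⟩ => ⟨mt cls_eq_cls.1 h, u, .refl u, w, .refl w, huw⟩⟩
  have hbu : b ≠ u := fun e => hne (cls_eq_cls.2 (e ▸ (hb : twinRel G w b)).symm)
  have hub : G.Adj u b := ((ha : twinRel G u a).adj_iff hbu (G.ne_of_adj hab).symm).2 hab
  have huw : u ≠ w := fun e => hne (e ▸ rfl)
  exact (((hb : twinRel G w b).adj_iff huw hbu.symm).2 hub.symm).symm

theorem typeOne_cls (h : ∀ w, twinRel G u w → w = u) : typeOne G (cls G u) :=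
  ⟨u, Set.ext fun w => ⟨h w, fun e => e ▸ twinRel.refl u⟩⟩

theorem type1K_of_isClique {X : TwinVertex G} (h : G.IsClique X.1) : type1K G X := by
  by_cases hX : X.1.Nontrivial
  · exact Or.inr ⟨hX, fun _ ha _ hb => h ha hb⟩
  · obtain ⟨u, hu⟩ := X.2
    refine Or.inl ⟨u, (Set.not_nontrivial_iff.1 hX).eq_singleton_of_mem ?_⟩
    exact hu ▸ twinRel.refl u

theorem typeK_cls (h : G.IsClique (cls G u).1) (huw : twinRel G u w) (hwu : w ≠ u) :
    typeK G (cls G u) :=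
  ⟨⟨w, huw, u, .refl u, hwu⟩, fun _ ha _ hb => h ha hb⟩

theorem exists_twinRel_ne_of_typeK (h : typeK G (cls G u)) : ∃ w, twinRel G u w ∧ w ≠ u := by
  obtain ⟨⟨a, ha, b, hb, hab⟩, -⟩ := h
  by_cases hau : a = u
  · exact ⟨b, hb, fun e => hab (hau.trans e.symm)⟩
  · exact ⟨a, ha, hau⟩

theorem not_typeN_of_isClique {X : TwinVertex G} (h : G.IsClique X.1) : ¬ typeN G X :=
  fun ⟨⟨a, ha, b, hb, hab⟩, hN⟩ => hN a ha b hb (h ha hb hab)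

theorem cls_ne_cls (h : ¬ twinRel G u w) : cls G u ≠ cls G w := mt cls_eq_cls.1 h

theorem twinGraph_adj_cls_of_adj (h : ¬ twinRel G u w) (huw : G.Adj u w) :
    (twinGraph G).Adj (cls G u) (cls G w) :=
  twinGraph_adj_cls.2 ⟨h, huw⟩

theorem not_twinGraph_adj_cls (h : ¬ G.Adj u w) : ¬ (twinGraph G).Adj (cls G u) (cls G w) :=
  fun h' => h (twinGraph_adj_cls.1 h').2

theorem eq_cls_of_cover {v0 v1 v2 v3 v4 : V}
    (h : ∀ u, twinRel G v0 u ∨ twinRel G v1 u ∨ twinRel G v2 u ∨ twinRel G v3 u ∨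
      twinRel G v4 u)
    (X : TwinVertex G) :
    X = cls G v0 ∨ X = cls G v1 ∨ X = cls G v2 ∨ X = cls G v3 ∨ X = cls G v4 := by
  obtain ⟨u, rfl⟩ := cls_surjective X
  rcases h u with h | h | h | h | h <;> simp [cls_eq_cls.2 h.symm]

end Twins

section Structures

variable {G : SimpleGraph V} {v0 v1 v2 v3 v4 : V}

theorem structG4_of
    (n01 : ¬ twinRel G v0 v1) (n02 : ¬ twinRel G v0 v2) (n03 : ¬ twinRel G v0 v3)
    (n04 : ¬ twinRel G v0 v4) (n12 : ¬ twinRel G v1 v2) (n13 : ¬ twinRel G v1 v3)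
    (n14 : ¬ twinRel G v1 v4) (n23 : ¬ twinRel G v2 v3) (n24 : ¬ twinRel G v2 v4)
    (n34 : ¬ twinRel G v3 v4)
    (hcover : ∀ u, twinRel G v0 u ∨ twinRel G v1 u ∨ twinRel G v2 u ∨ twinRel G v3 u ∨
      twinRel G v4 u)
    (a01 : G.Adj v0 v1) (a12 : G.Adj v1 v2) (a23 : G.Adj v2 v3) (a34 : G.Adj v3 v4)
    (a40 : G.Adj v4 v0) (h02 : ¬ G.Adj v0 v2) (h13 : ¬ G.Adj v1 v3) (h24 : ¬ G.Adj v2 v4)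
    (h30 : ¬ G.Adj v3 v0) (h41 : ¬ G.Adj v4 v1)
    (t0 : typeOne G (cls G v0)) (t1 : typeOne G (cls G v1)) (t2 : typeOne G (cls G v2))
    (t3 : typeOne G (cls G v3)) (t4 : typeOne G (cls G v4)) : structG4 G := by
  have hX := eq_cls_of_cover hcover
  refine ⟨cls G v0, cls G v1, cls G v2, cls G v3, cls G v4, cls_ne_cls n01, cls_ne_cls n02,
    cls_ne_cls n03, cls_ne_cls n04, cls_ne_cls n12, cls_ne_cls n13, cls_ne_cls n14,
    cls_ne_cls n23, cls_ne_cls n24, cls_ne_cls n34, hX, twinGraph_adj_cls_of_adj n01 a01,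
    twinGraph_adj_cls_of_adj n12 a12, twinGraph_adj_cls_of_adj n23 a23,
    twinGraph_adj_cls_of_adj n34 a34, twinGraph_adj_cls_of_adj (fun h => n04 h.symm) a40,
    not_twinGraph_adj_cls h02, not_twinGraph_adj_cls h13, not_twinGraph_adj_cls h24,
    not_twinGraph_adj_cls h30, not_twinGraph_adj_cls h41, fun X => ?_⟩
  rcases hX X with rfl | rfl | rfl | rfl | rfl <;> assumption

theorem structG5_of
    (n01 : ¬ twinRel G v0 v1) (n02 : ¬ twinRel G v0 v2) (n03 : ¬ twinRel G v0 v3)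
    (n04 : ¬ twinRel G v0 v4) (n12 : ¬ twinRel G v1 v2) (n13 : ¬ twinRel G v1 v3)
    (n14 : ¬ twinRel G v1 v4) (n23 : ¬ twinRel G v2 v3) (n24 : ¬ twinRel G v2 v4)
    (n34 : ¬ twinRel G v3 v4)
    (hcover : ∀ u, twinRel G v0 u ∨ twinRel G v1 u ∨ twinRel G v2 u ∨ twinRel G v3 u ∨
      twinRel G v4 u)
    (a01 : G.Adj v0 v1) (a12 : G.Adj v1 v2) (a23 : G.Adj v2 v3) (a34 : G.Adj v3 v4)
    (a40 : G.Adj v4 v0) (a02 : G.Adj v0 v2)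
    (h13 : ¬ G.Adj v1 v3) (h14 : ¬ G.Adj v1 v4) (h24 : ¬ G.Adj v2 v4)
    (t3 : typeOne G (cls G v3)) (t4 : typeOne G (cls G v4)) (t0 : type1K G (cls G v0))
    (t1 : type1K G (cls G v1)) (t2 : type1K G (cls G v2)) : structG5 G :=
  ⟨cls G v0, cls G v1, cls G v2, cls G v3, cls G v4, cls_ne_cls n01, cls_ne_cls n02,
    cls_ne_cls n03, cls_ne_cls n04, cls_ne_cls n12, cls_ne_cls n13, cls_ne_cls n14,
    cls_ne_cls n23, cls_ne_cls n24, cls_ne_cls n34, eq_cls_of_cover hcover,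
    twinGraph_adj_cls_of_adj n01 a01, twinGraph_adj_cls_of_adj n12 a12,
    twinGraph_adj_cls_of_adj n23 a23, twinGraph_adj_cls_of_adj n34 a34,
    twinGraph_adj_cls_of_adj (fun h => n04 h.symm) a40, twinGraph_adj_cls_of_adj n02 a02,
    not_twinGraph_adj_cls h13, not_twinGraph_adj_cls h14, not_twinGraph_adj_cls h24,
    t3, t4, t0, t1, t2⟩

theorem structG6_of
    (n01 : ¬ twinRel G v0 v1) (n02 : ¬ twinRel G v0 v2) (n03 : ¬ twinRel G v0 v3)
    (n04 : ¬ twinRel G v0 v4) (n12 : ¬ twinRel G v1 v2) (n13 : ¬ twinRel G v1 v3)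
    (n14 : ¬ twinRel G v1 v4) (n23 : ¬ twinRel G v2 v3) (n24 : ¬ twinRel G v2 v4)
    (n34 : ¬ twinRel G v3 v4)
    (hcover : ∀ u, twinRel G v0 u ∨ twinRel G v1 u ∨ twinRel G v2 u ∨ twinRel G v3 u ∨
      twinRel G v4 u)
    (a01 : G.Adj v0 v1) (a12 : G.Adj v1 v2) (a23 : G.Adj v2 v3) (a34 : G.Adj v3 v4)
    (a40 : G.Adj v4 v0) (a02 : G.Adj v0 v2) (a03 : G.Adj v0 v3)
    (h13 : ¬ G.Adj v1 v3) (h14 : ¬ G.Adj v1 v4) (h24 : ¬ G.Adj v2 v4)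
    (c0 : G.IsClique (cls G v0).1) (c1 : G.IsClique (cls G v1).1) (c2 : G.IsClique (cls G v2).1)
    (c3 : G.IsClique (cls G v3).1) (c4 : G.IsClique (cls G v4).1)
    (k13 : ¬ (typeK G (cls G v1) ∧ typeK G (cls G v3)))
    (k14 : ¬ (typeK G (cls G v1) ∧ typeK G (cls G v4)))
    (k24 : ¬ (typeK G (cls G v2) ∧ typeK G (cls G v4))) : structG6 G := by
  have hX := eq_cls_of_cover hcover
  have e01 := twinGraph_adj_cls_of_adj n01 a01
  have e12 := twinGraph_adj_cls_of_adj n12 a12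
  have e23 := twinGraph_adj_cls_of_adj n23 a23
  have e34 := twinGraph_adj_cls_of_adj n34 a34
  have e04 := (twinGraph_adj_cls_of_adj (fun h => n04 h.symm) a40).symm
  have e02 := twinGraph_adj_cls_of_adj n02 a02
  have e03 := twinGraph_adj_cls_of_adj n03 a03
  refine ⟨cls G v0, cls G v1, cls G v2, cls G v3, cls G v4, cls_ne_cls n01, cls_ne_cls n02,
    cls_ne_cls n03, cls_ne_cls n04, cls_ne_cls n12, cls_ne_cls n13, cls_ne_cls n14,
    cls_ne_cls n23, cls_ne_cls n24, cls_ne_cls n34, hX, e01, e12, e23, e34, e04.symm, e02, e03,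
    not_twinGraph_adj_cls h13, not_twinGraph_adj_cls h14, not_twinGraph_adj_cls h24,
    type1K_of_isClique c1, type1K_of_isClique c2, type1K_of_isClique c3, type1K_of_isClique c4,
    fun X Y hXY hadj hK => ?_, fun X Y _ ⟨_, hN⟩ => ?_⟩
  · rcases hX X with rfl | rfl | rfl | rfl | rfl <;>
      rcases hX Y with rfl | rfl | rfl | rfl | rfl <;>
      first
      | exact hXY rfl
      | exact hadj (by assumption)
      | exact hadj (Adj.symm (by assumption))
      | exact k13 hK | exact k13 hK.symm | exact k14 hK | exact k14 hK.symm
      | exact k24 hK | exact k24 hK.symm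
  · rcases hX Y with rfl | rfl | rfl | rfl | rfl <;> exact not_typeN_of_isClique ‹_› hN

theorem structG7_of {a b c d l : V}
    (nab : ¬ twinRel G a b) (nac : ¬ twinRel G a c) (nad : ¬ twinRel G a d)
    (nal : ¬ twinRel G a l) (nbc : ¬ twinRel G b c) (nbd : ¬ twinRel G b d)
    (nbl : ¬ twinRel G b l) (ncd : ¬ twinRel G c d) (ncl : ¬ twinRel G c l)
    (ndl : ¬ twinRel G d l)
    (hcover : ∀ u, twinRel G a u ∨ twinRel G b u ∨ twinRel G c u ∨ twinRel G d u ∨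
      twinRel G l u)
    (hab : G.Adj a b) (hac : G.Adj a c) (had : G.Adj a d) (hbc : G.Adj b c) (hbd : G.Adj b d)
    (hal : G.Adj a l) (hcd : ¬ G.Adj c d) (hbl : ¬ G.Adj b l) (hcl : ¬ G.Adj c l)
    (hdl : ¬ G.Adj d l) (tl : typeOne G (cls G l)) (ta : type1K G (cls G a))
    (tb : type1K G (cls G b)) (tc : typeK G (cls G c)) (td : typeOne G (cls G d)) :
    structG7 G :=
  ⟨cls G a, cls G b, cls G c, cls G d, cls G l, cls_ne_cls nab, cls_ne_cls nac, cls_ne_cls nad,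
    cls_ne_cls nal, cls_ne_cls nbc, cls_ne_cls nbd, cls_ne_cls nbl, cls_ne_cls ncd,
    cls_ne_cls ncl, cls_ne_cls ndl, eq_cls_of_cover hcover, twinGraph_adj_cls_of_adj nab hab,
    twinGraph_adj_cls_of_adj nac hac, twinGraph_adj_cls_of_adj nad had,
    twinGraph_adj_cls_of_adj nbc hbc, twinGraph_adj_cls_of_adj nbd hbd,
    twinGraph_adj_cls_of_adj nal hal, not_twinGraph_adj_cls hcd, not_twinGraph_adj_cls hbl,
    not_twinGraph_adj_cls hcl, not_twinGraph_adj_cls hdl, tl, ta, tb, tc, td⟩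

end Structures

section Separation

variable {G : SimpleGraph V} {S : Set V} {u w t : V}

def Separated (G : SimpleGraph V) (S : Set V) (u w : V) : Prop :=
  ∃ t ∉ S, ¬ (G.Adj u t ↔ G.Adj w t)

theorem Separated.ne (h : Separated G S u w) : u ≠ w := by
  rintro rfl
  obtain ⟨t, -, ht⟩ := h
  exact ht Iff.rfl

theorem Separated.symm (h : Separated G S u w) : Separated G S w u :=
  let ⟨t, ht, hne⟩ := h
  ⟨t, ht, fun h => hne h.symm⟩

theorem Separated.of_adj (ht : t ∉ S) (hu : G.Adj u t) (hw : ¬ G.Adj w t) : Separated G S u w :=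
  ⟨t, ht, fun h => hw (h.1 hu)⟩

theorem Separated.of_not_adj (ht : t ∉ S) (hu : ¬ G.Adj u t) (hw : G.Adj w t) :
    Separated G S u w :=
  (Separated.of_adj ht hw hu).symm

theorem resolves_compl_of_separated (hc : G.Connected)
    (h : ∀ u ∈ S, ∀ w ∈ S, u ≠ w → Separated G S u w) : Resolves G Sᶜ := by
  intro u w huw
  by_cases hu : u ∈ S
  · by_cases hw : w ∈ S
    · obtain ⟨t, ht, hne⟩ := h u hu w hw huw
      refine ⟨t, ht, fun hd => hne ?_⟩
      rw [← dist_eq_one_iff_adj, ← dist_eq_one_iff_adj, hd]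
    · refine ⟨w, hw, ?_⟩
      rw [dist_self]
      exact (hc.pos_dist_of_ne huw).ne'
  · refine ⟨u, hu, ?_⟩
    rw [dist_self]
    exact (hc.pos_dist_of_ne huw.symm).ne

theorem metricDim_le_card_sub [Fintype V] (hc : G.Connected)
    (h : ∀ u ∈ S, ∀ w ∈ S, u ≠ w → Separated G S u w) :
    metricDim G ≤ Fintype.card V - S.ncard := by
  rw [← Nat.card_eq_fintype_card, ← Set.ncard_compl]
  exact Nat.sInf_le ⟨Sᶜ, resolves_compl_of_separated hc h, rfl⟩

theorem false_of_separated_four [Fintype V] (hc : G.Connected)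
    (hβ : metricDim G = Fintype.card V - 3) {a b c d : V}
    (hab : Separated G {a, b, c, d} a b) (hac : Separated G {a, b, c, d} a c)
    (had : Separated G {a, b, c, d} a d) (hbc : Separated G {a, b, c, d} b c)
    (hbd : Separated G {a, b, c, d} b d) (hcd : Separated G {a, b, c, d} c d) : False := by
  have hcard : ({a, b, c, d} : Set V).ncard = 4 := by
    rw [Set.ncard_insert_of_notMem (by simp [hab.ne, hac.ne, had.ne]),
      Set.ncard_insert_of_notMem (by simp [hbc.ne, hbd.ne]), Set.ncard_pair hcd.ne]
  have hle : ({a, b, c, d} : Set V).ncard ≤ Fintype.card V := by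
    rw [← Nat.card_eq_fintype_card]
    exact Set.ncard_le_card _
  have hsep : ∀ u ∈ ({a, b, c, d} : Set V), ∀ w ∈ ({a, b, c, d} : Set V), u ≠ w →
      Separated G {a, b, c, d} u w := by
    simp only [Set.mem_insert_iff, Set.mem_singleton_iff]
    rintro u (rfl | rfl | rfl | rfl) w (rfl | rfl | rfl | rfl) huw <;>
      first
      | exact absurd rfl huw
      | assumption
      | exact Separated.symm ‹_›
  have := metricDim_le_card_sub hc hsep
  omega

end Separation

section Far

variable {G : SimpleGraph V} {v a b p u w : V}

/-- `b* ∈ Γ₂*(v*)`, when `G` has diameter two. -/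
def Far (G : SimpleGraph V) (v b : V) : Prop := ¬ G.Adj v b ∧ ¬ twinRel G v b

theorem Far.ne (h : Far G v b) : b ≠ v := by
  rintro rfl
  exact h.2 (.refl b)

theorem Far.ne_of_adj (h : Far G v b) (ha : G.Adj v a) : a ≠ b := fun e => h.1 (e ▸ ha)

theorem Far.of_twinRel (h : Far G v b) (hbu : twinRel G b u) : Far G v u := by
  have huv : u ≠ v := fun e => h.2 (e ▸ hbu).symm
  refine ⟨fun hvu => h.1 ?_, fun hvu => h.2 (hvu.trans hbu.symm)⟩
  exact ((hbu.adj_iff h.ne.symm huv.symm).2 hvu.symm).symm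

theorem Far.not_adj_of_twinRel (hb : Far G v b) (h : twinRel G v u) : ¬ G.Adj b u :=
  fun h' => hb.1 ((h.adj_iff hb.ne fun e => hb.2 (e ▸ h)).2 h'.symm)

theorem adj_of_twinRel (ha : G.Adj v a) (hva : ¬ twinRel G v a) (hau : twinRel G a u) :
    G.Adj v u := by
  have huv : u ≠ v := fun e => hva (e ▸ hau).symm
  exact ((hau.adj_iff (G.ne_of_adj ha) huv.symm).1 ha.symm).symm

theorem not_twinRel_of_adj_of_far (ha : G.Adj v a) (hb : Far G v b) : ¬ twinRel G a b :=
  not_twinRel_of_adj ha.symm (fun h => hb.1 h.symm) hb.ne.symm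

theorem not_twinRel_of_far_adj (hb : Far G v b) (hab : G.Adj a b) : ¬ twinRel G v a :=
  fun h => hb.1 ((h.adj_iff hb.ne (G.ne_of_adj hab).symm).2 hab)

theorem Far.mem (h : Far G v b) : b ∈ {b | b ≠ v ∧ ¬ G.Adj v b} := ⟨h.ne, h.1⟩

theorem far_of_isClique (hB : G.IsClique {b | b ≠ v ∧ ¬ G.Adj v b}) (hp : Far G v p)
    (hb : b ≠ v) (hvb : ¬ G.Adj v b) : Far G v b := by
  refine ⟨hvb, fun h => ?_⟩
  have hbp : b ≠ p := fun e => hp.2 (e ▸ h)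
  exact hp.1 ((h.adj_iff hp.ne hbp.symm).2 (hB ⟨hb, hvb⟩ ⟨hp.ne, hp.1⟩ hbp))

theorem isClique_of_adj {T : Set V} (h : G.IsClique T ∨ G.IsIndepSet T) (ha : a ∈ T)
    (hb : b ∈ T) (hab : G.Adj a b) : G.IsClique T :=
  h.resolve_right fun h' => h' ha hb (G.ne_of_adj hab) hab

theorem exists_adj_not_adj_of_far (hB : G.IsIndepSet {b | b ≠ v ∧ ¬ G.Adj v b})
    (hp : Far G v p) : ∃ a, G.Adj v a ∧ ¬ G.Adj p a := by
  by_contra! h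
  refine hp.2 (twinRel_iff.2 fun t htv htp => ⟨h t, fun hpt => ?_⟩)
  by_contra hvt
  exact hB hp.mem ⟨htv, hvt⟩ htp.symm hpt

theorem twinRel_of_forall_far_not_adj (hA : G.IsClique (G.neighborSet v))
    (hB : ∀ b, b ≠ v → ¬ G.Adj v b → Far G v b) (ha : G.Adj v a)
    (h : ∀ b, Far G v b → ¬ G.Adj a b) : twinRel G v a := by
  refine twinRel_iff.2 fun t htv hta => ?_
  by_cases hvt : G.Adj v t
  · exact iff_of_true hvt (hA ha hvt hta.symm)
  · exact iff_of_false hvt (h t (hB t htv hvt))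

theorem isClique_cls_of_adj (hA : G.IsClique (G.neighborSet v)) (ha : G.Adj v a)
    (hva : ¬ twinRel G v a) : G.IsClique (cls G a).1 :=
  hA.subset fun _ hu => adj_of_twinRel ha hva hu

theorem isClique_cls_of_far (hB : G.IsClique {b | b ≠ v ∧ ¬ G.Adj v b}) (hb : Far G v b) :
    G.IsClique (cls G b).1 :=
  hB.subset fun _ hu => And.intro (hb.of_twinRel hu).ne (hb.of_twinRel hu).1

theorem isClique_cls_self (hA : G.IsClique (G.neighborSet v))
    (hB : ∀ b, b ≠ v → ¬ G.Adj v b → Far G v b) : G.IsClique (cls G v).1 := by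
  refine (hA.insert fun _ hb _ => hb).subset fun u (hu : twinRel G v u) => ?_
  by_contra h
  simp only [Set.mem_insert_iff, mem_neighborSet, not_or] at h
  exact (hB u h.1 h.2).2 hu

theorem adj_of_twinRel_self (hfar : ∀ b, b ≠ v → ¬ G.Adj v b → Far G v b)
    (h : twinRel G v w) (hw : w ≠ v) : G.Adj v w := by
  by_contra hvw
  exact (hfar w hw hvw).2 h

end Far

/-- The hypotheses of the main theorem in terms of adjacency, for `G` of diameter two, with
`x*` and `y*` the two elements of `R₁*(v*)`; `not_separated` is what `β(G) = n - 3` provides. -/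
structure Config (G : SimpleGraph V) (v x y : V) : Prop where
  exists_adj_adj : ∀ {a b}, a ≠ b → ¬ G.Adj a b → ∃ t, G.Adj a t ∧ G.Adj t b
  not_separated : ∀ {a b c d : V}, Separated G {a, b, c, d} a b →
    Separated G {a, b, c, d} a c → Separated G {a, b, c, d} a d →
    Separated G {a, b, c, d} b c → Separated G {a, b, c, d} b d →
    Separated G {a, b, c, d} c d → False
  nbrs : G.IsClique (G.neighborSet v) ∨ G.IsIndepSet (G.neighborSet v)
  nonNbrs :
    G.IsClique {b | b ≠ v ∧ ¬ G.Adj v b} ∨ G.IsIndepSet {b | b ≠ v ∧ ¬ G.Adj v b}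
  adj_x : G.Adj v x
  adj_y : G.Adj v y
  not_twinRel_xy : ¬ twinRel G x y
  exists_far_x : ∃ b, Far G v b ∧ G.Adj x b
  exists_far_y : ∃ b, Far G v b ∧ G.Adj y b
  twinRel_of_adj_far :
    ∀ {a b}, G.Adj v a → Far G v b → G.Adj a b → twinRel G x a ∨ twinRel G y a

namespace Config

variable {G : SimpleGraph V} {v x y a b b' p p' q r r' s t u x' z : V}

theorem swap (S : Config G v x y) : Config G v y x where
  __ := S
  adj_x := S.adj_y
  adj_y := S.adj_x
  not_twinRel_xy h := S.not_twinRel_xy h.symm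
  exists_far_x := S.exists_far_y
  exists_far_y := S.exists_far_x
  twinRel_of_adj_far ha hb hab := (S.twinRel_of_adj_far ha hb hab).symm

theorem not_mem_of_adj (ht : G.Adj v t) (htx : t ≠ x) (hty : t ≠ y) (hts : t ≠ s) :
    t ∉ ({v, x, y, s} : Set V) := by
  simp only [Set.mem_insert_iff, Set.mem_singleton_iff, not_or]
  exact ⟨(G.ne_of_adj ht).symm, htx, hty, hts⟩

theorem not_mem_of_not_adj (S : Config G v x y) (htv : t ≠ v) (ht : ¬ G.Adj v t)
    (hts : t ≠ s) :
    t ∉ ({v, x, y, s} : Set V) := by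
  simp only [Set.mem_insert_iff, Set.mem_singleton_iff, not_or]
  exact ⟨htv, fun e => ht (e ▸ S.adj_x), fun e => ht (e ▸ S.adj_y), hts⟩

theorem not_mem_of_far (S : Config G v x y) (ht : Far G v t) (hts : t ≠ s) :
    t ∉ ({v, x, y, s} : Set V) :=
  S.not_mem_of_not_adj ht.ne ht.1 hts

theorem ne_xy (S : Config G v x y) : x ≠ y := fun e => S.not_twinRel_xy (e ▸ .refl x)

theorem not_twinRel_v_x (S : Config G v x y) : ¬ twinRel G v x :=
  let ⟨_, hb, hxb⟩ := S.exists_far_x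
  not_twinRel_of_far_adj hb hxb

theorem adj_x_or_adj_y (S : Config G v x y) (hb : Far G v b) : G.Adj x b ∨ G.Adj y b := by
  obtain ⟨t, hvt, htb⟩ := S.exists_adj_adj hb.ne.symm hb.1
  refine (S.twinRel_of_adj_far hvt hb htb).imp (fun h => ?_) (fun h => ?_)
  · exact (h.adj_iff (hb.ne_of_adj S.adj_x).symm (hb.ne_of_adj hvt).symm).2 htb
  · exact (h.adj_iff (hb.ne_of_adj S.adj_y).symm (hb.ne_of_adj hvt).symm).2 htb

theorem adj_of_adj_far (S : Config G v x y) (ha : G.Adj v a) (hb : Far G v b) (hab : G.Adj a b)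
    (hb' : Far G v b') (hx : G.Adj x b → G.Adj x b') (hy : G.Adj y b → G.Adj y b') :
    G.Adj a b' := by
  rcases S.twinRel_of_adj_far ha hb hab with h | h
  · refine (h.adj_iff (hb'.ne_of_adj S.adj_x).symm (hb'.ne_of_adj ha).symm).1 (hx ?_)
    exact (h.adj_iff (hb.ne_of_adj S.adj_x).symm (hb.ne_of_adj ha).symm).2 hab
  · refine (h.adj_iff (hb'.ne_of_adj S.adj_y).symm (hb'.ne_of_adj ha).symm).1 (hy ?_)
    exact (h.adj_iff (hb.ne_of_adj S.adj_y).symm (hb.ne_of_adj ha).symm).2 hab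

theorem twinRel_of_far (S : Config G v x y) (hb : Far G v b) (hb' : Far G v b')
    (hx : G.Adj x b ↔ G.Adj x b') (hy : G.Adj y b ↔ G.Adj y b') : twinRel G b b' := by
  refine twinRel_iff.2 fun t htb htb' => ?_
  by_cases hvt : G.Adj v t
  · rw [G.adj_comm b, G.adj_comm b']
    exact ⟨fun h => S.adj_of_adj_far hvt hb h hb' hx.1 hy.1,
      fun h => S.adj_of_adj_far hvt hb' h hb hx.2 hy.2⟩
  rcases eq_or_ne t v with rfl | htv
  · exact iff_of_false (fun h => hb.1 h.symm) (fun h => hb'.1 h.symm)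
  rcases S.nonNbrs with hB | hB
  · exact iff_of_true (hB hb.mem ⟨htv, hvt⟩ htb.symm) (hB hb'.mem ⟨htv, hvt⟩ htb'.symm)
  · exact iff_of_false (hB hb.mem ⟨htv, hvt⟩ htb.symm) (hB hb'.mem ⟨htv, hvt⟩ htb'.symm)

-- A far vertex is *private* (to `x`) if it is adjacent to `x` but not to `y`, and *shared* if it
-- is adjacent to both; a neighbour of `v` without far neighbours is *lonely*.
theorem exists_private (S : Config G v x y) :
    ∃ p, Far G v p ∧ (G.Adj x p ∧ ¬ G.Adj y p ∨ G.Adj y p ∧ ¬ G.Adj x p) := by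
  by_contra! h
  refine S.not_twinRel_xy (twinRel_iff.2 fun t htx hty => ?_)
  by_cases hvt : G.Adj v t
  · rcases S.nbrs with hA | hA
    · exact iff_of_true (hA S.adj_x hvt htx.symm) (hA S.adj_y hvt hty.symm)
    · exact iff_of_false (hA S.adj_x hvt htx.symm) (hA S.adj_y hvt hty.symm)
  rcases eq_or_ne t v with rfl | htv
  · exact iff_of_true S.adj_x.symm S.adj_y.symm
  by_cases ht : twinRel G v t
  · exact iff_of_true ((ht.adj_iff (G.ne_of_adj S.adj_x).symm htx.symm).1 S.adj_x).symm
      ((ht.adj_iff (G.ne_of_adj S.adj_y).symm hty.symm).1 S.adj_y).symm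
  · exact ⟨(h t ⟨hvt, ht⟩).1, (h t ⟨hvt, ht⟩).2⟩

theorem adj_of_private (S : Config G v x y) (hp : Far G v p) (hxp : G.Adj x p)
    (hyp : ¬ G.Adj y p) (hq : Far G v q) (hxq : ¬ G.Adj x q) : G.Adj p q := by
  have hpq : p ≠ q := fun e => hxq (e ▸ hxp)
  by_contra hnpq
  obtain ⟨t, hpt, htq⟩ := S.exists_adj_adj hpq hnpq
  by_cases hvt : G.Adj v t
  · rcases S.twinRel_of_adj_far hvt hp hpt.symm with h | h
    · exact hxq ((h.adj_iff (hq.ne_of_adj S.adj_x).symm (G.ne_of_adj htq).symm).2 htq)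
    · exact hyp ((h.adj_iff (hp.ne_of_adj S.adj_y).symm (G.ne_of_adj hpt)).2 hpt.symm)
  · have htv : t ≠ v := fun e => hp.1 (e ▸ hpt.symm)
    rcases S.nonNbrs with hB | hB
    · exact hnpq (hB hp.mem hq.mem hpq)
    · exact hB hp.mem ⟨htv, hvt⟩ (G.ne_of_adj hpt) hpt

theorem false_of_private_private_shared (S : Config G v x y) (hp : Far G v p)
    (hxp : G.Adj x p) (hyp : ¬ G.Adj y p) (hq : Far G v q) (hyq : G.Adj y q)
    (hxq : ¬ G.Adj x q) (hr : Far G v r) (hxr : G.Adj x r) (hyr : G.Adj y r) : False := by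
  have hB := isClique_of_adj S.nonNbrs hp.mem hq.mem (S.adj_of_private hp hxp hyp hq hxq)
  have hrp : G.Adj r p := hB hr.mem hp.mem fun e => hyp (e ▸ hyr)
  have hrq : G.Adj r q := hB hr.mem hq.mem fun e => hxq (e ▸ hxr)
  have hp' := S.not_mem_of_far hp fun e => hyp (e ▸ hyr)
  have hq' := S.not_mem_of_far hq fun e => hxq (e ▸ hxr)
  exact S.not_separated (.of_not_adj hp' hp.1 hxp) (.of_not_adj hq' hq.1 hyq)
    (.of_not_adj hp' hp.1 hrp) (.of_adj hp' hxp hyp) (.of_not_adj hq' hxq hrq)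
    (.of_not_adj hp' hyp hrp)

theorem twinRel_cases (S : Config G v x y) (hA : G.IsClique (G.neighborSet v))
    (hfar : ∀ b, b ≠ v → ¬ G.Adj v b → Far G v b) (u : V) :
    twinRel G v u ∨ twinRel G x u ∨ twinRel G y u ∨ Far G v u := by
  by_cases hvu : G.Adj v u
  · by_cases h : ∃ b, Far G v b ∧ G.Adj u b
    · obtain ⟨b, hb, hub⟩ := h
      exact Or.inr ((S.twinRel_of_adj_far hvu hb hub).imp_right Or.inl)
    · push Not at h
      exact Or.inl (twinRel_of_forall_far_not_adj hA hfar hvu h)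
  · rcases eq_or_ne u v with rfl | huv
    · exact Or.inl (.refl u)
    · exact Or.inr (Or.inr (Or.inr (hfar u huv hvu)))

theorem exists_far_adj_of_isIndepSet (S : Config G v x y) (hA : G.IsIndepSet (G.neighborSet v))
    (hfar : ∀ b, b ≠ v → ¬ G.Adj v b → Far G v b) (hp : Far G v p) (ha : G.Adj v a) :
    ∃ b, Far G v b ∧ G.Adj a b := by
  by_cases hap : G.Adj a p
  · exact ⟨p, hp, hap⟩
  obtain ⟨t, hat, htp⟩ := S.exists_adj_adj (hp.ne_of_adj ha) hap
  have hvt : ¬ G.Adj v t := fun hvt => hA ha hvt (G.ne_of_adj hat) hat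
  exact ⟨t, hfar t (fun e => hp.1 (e ▸ htp)) hvt, hat⟩

theorem twinRel_of_far_of_shared (S : Config G v x y) (hp : Far G v p) (hxp : G.Adj x p)
    (hyp : ¬ G.Adj y p) (hr : Far G v r) (hxr : G.Adj x r) (hyr : G.Adj y r)
    (hQ : ∀ b, Far G v b → G.Adj y b → G.Adj x b) (hu : Far G v u) :
    twinRel G p u ∨ twinRel G r u := by
  have hxu : G.Adj x u := (S.adj_x_or_adj_y hu).elim id (hQ u hu)
  by_cases hyu : G.Adj y u
  · exact Or.inr (S.twinRel_of_far hr hu (iff_of_true hxr hxu) (iff_of_true hyr hyu))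
  · exact Or.inl (S.twinRel_of_far hp hu (iff_of_true hxp hxu) (iff_of_false hyp hyu))

theorem adj_of_typeK_private (S : Config G v x y) (hA : G.IsClique (G.neighborSet v))
    (hB : G.IsClique {b | b ≠ v ∧ ¬ G.Adj v b}) (hp : Far G v p) (hxp : G.Adj x p)
    (hyp : ¬ G.Adj y p) (hr : Far G v r) (hxr : G.Adj x r) (hyr : G.Adj y r)
    (hK : typeK G (cls G p)) (ha : G.Adj v a) (hax : a ≠ x) (hay : a ≠ y) : G.Adj p a := by
  by_contra hpa
  obtain ⟨p', hpp', hp'p⟩ := exists_twinRel_ne_of_typeK hK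
  have hp' := hp.of_twinRel hpp'
  have hxp' := hpp'.adj_right hxp (hp'.ne_of_adj S.adj_x)
  have hyp' := hpp'.not_adj_right hyp (hp.ne_of_adj S.adj_y)
  have hpr : p ≠ r := fun e => hyp (e ▸ hyr)
  have hr₀ := S.not_mem_of_far hr hpr.symm
  have hp'₀ := S.not_mem_of_far hp' hp'p
  have ha₀ := not_mem_of_adj ha hax hay (hp.ne_of_adj ha)
  exact S.not_separated (.of_not_adj hr₀ hr.1 hxr) (.of_not_adj hr₀ hr.1 hyr)
    (.of_not_adj hr₀ hr.1 (hB hp.mem hr.mem hpr)) (.of_adj hp'₀ hxp' hyp')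
    (.of_adj ha₀ (hA S.adj_x ha hax.symm) hpa)
    (.of_not_adj hp'₀ hyp' (hB hp.mem hp'.mem (Ne.symm hp'p)))

theorem adj_of_typeK_shared (S : Config G v x y) (hA : G.IsClique (G.neighborSet v))
    (hB : G.IsClique {b | b ≠ v ∧ ¬ G.Adj v b}) (hp : Far G v p) (hxp : G.Adj x p)
    (hyp : ¬ G.Adj y p) (hr : Far G v r) (hyr : G.Adj y r)
    (hK : typeK G (cls G r)) (ha : G.Adj v a) (hax : a ≠ x) (hay : a ≠ y) : G.Adj r a := by
  by_contra hra
  obtain ⟨r', hrr', hr'r⟩ := exists_twinRel_ne_of_typeK hK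
  have hr' := hr.of_twinRel hrr'
  have hyr' := hrr'.adj_right hyr (hr'.ne_of_adj S.adj_y)
  have hpr : p ≠ r := fun e => hyp (e ▸ hyr)
  have hp₀ := S.not_mem_of_far hp hpr
  have hr'₀ := S.not_mem_of_far hr' hr'r
  have ha₀ := not_mem_of_adj ha hax hay (hr.ne_of_adj ha)
  exact S.not_separated (.of_not_adj hp₀ hp.1 hxp) (.of_not_adj hr'₀ hr'.1 hyr')
    (.of_adj ha₀ ha hra) (.of_adj hp₀ hxp hyp)
    (.of_adj ha₀ (hA S.adj_x ha hax.symm) hra)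
    (.of_not_adj hp₀ hyp (hB hr.mem hp.mem hpr.symm))

theorem not_typeK_and_typeK_of_private_shared (S : Config G v x y)
    (hA : G.IsClique (G.neighborSet v)) (hB : G.IsClique {b | b ≠ v ∧ ¬ G.Adj v b})
    (hp : Far G v p) (hxp : G.Adj x p) (hyp : ¬ G.Adj y p) (hr : Far G v r) (hxr : G.Adj x r)
    (hyr : G.Adj y r) :
    ¬ (typeK G (cls G p) ∧ typeK G (cls G y)) ∧
      ¬ (typeK G (cls G p) ∧ typeK G (cls G v)) ∧
      ¬ (typeK G (cls G r) ∧ typeK G (cls G v)) := by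
  have hfar : ∀ b, b ≠ v → ¬ G.Adj v b → Far G v b := fun _ => far_of_isClique hB hp
  have hvy := S.swap.not_twinRel_v_x
  refine ⟨fun ⟨hKp, hKy⟩ => ?_, fun ⟨hKp, hKv⟩ => ?_, fun ⟨hKr, hKv⟩ => ?_⟩
  · obtain ⟨w, hyw, hwy⟩ := exists_twinRel_ne_of_typeK hKy
    exact hyw.not_adj_right (mt Adj.symm hyp) (hp.ne_of_adj S.adj_y).symm
      (S.adj_of_typeK_private hA hB hp hxp hyp hr hxr hyr hKp (adj_of_twinRel S.adj_y hvy hyw)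
        (fun e => S.not_twinRel_xy (e ▸ hyw).symm) hwy)
  · obtain ⟨w, hvw, hwv⟩ := exists_twinRel_ne_of_typeK hKv
    exact hp.not_adj_of_twinRel hvw (S.adj_of_typeK_private hA hB hp hxp hyp hr hxr hyr hKp
      (adj_of_twinRel_self hfar hvw hwv) (fun e => S.not_twinRel_v_x (e ▸ hvw))
      fun e => hvy (e ▸ hvw))
  · obtain ⟨w, hvw, hwv⟩ := exists_twinRel_ne_of_typeK hKv
    exact hr.not_adj_of_twinRel hvw (S.adj_of_typeK_shared hA hB hp hxp hyp hr hyr hKr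
      (adj_of_twinRel_self hfar hvw hwv) (fun e => S.not_twinRel_v_x (e ▸ hvw))
      fun e => hvy (e ▸ hvw))

theorem structG6_of_private_shared (S : Config G v x y) (hA : G.IsClique (G.neighborSet v))
    (hB : G.IsClique {b | b ≠ v ∧ ¬ G.Adj v b}) (hp : Far G v p) (hxp : G.Adj x p)
    (hyp : ¬ G.Adj y p) (hr : Far G v r) (hxr : G.Adj x r) (hyr : G.Adj y r)
    (hQ : ∀ b, Far G v b → G.Adj y b → G.Adj x b) : structG6 G := by
  have hfar : ∀ b, b ≠ v → ¬ G.Adj v b → Far G v b := fun _ => far_of_isClique hB hp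
  have hpr : p ≠ r := fun e => hyp (e ▸ hyr)
  have hvy := S.swap.not_twinRel_v_x
  have hcover : ∀ u, twinRel G x u ∨ twinRel G p u ∨ twinRel G r u ∨ twinRel G y u ∨
      twinRel G v u := by
    intro u
    rcases S.twinRel_cases hA hfar u with h | h | h | hu
    · exact .inr <| .inr <| .inr <| .inr h
    · exact .inl h
    · exact .inr <| .inr <| .inr <| .inl h
    · exact .inr <| (S.twinRel_of_far_of_shared hp hxp hyp hr hxr hyr hQ hu).imp_right .inl
  obtain ⟨hpy, hpv, hrv⟩ := S.not_typeK_and_typeK_of_private_shared hA hB hp hxp hyp hr hxr hyr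
  exact structG6_of (v0 := x) (v1 := p) (v2 := r) (v3 := y) (v4 := v)
    (not_twinRel_of_adj_of_far S.adj_x hp) (not_twinRel_of_adj_of_far S.adj_x hr)
    S.not_twinRel_xy (mt twinRel.symm S.not_twinRel_v_x)
    (not_twinRel_of_not_adj (mt Adj.symm hyp) hyr.symm (hp.ne_of_adj S.adj_y))
    (mt twinRel.symm (not_twinRel_of_adj_of_far S.adj_y hp)) (mt twinRel.symm hp.2)
    (mt twinRel.symm (not_twinRel_of_adj_of_far S.adj_y hr)) (mt twinRel.symm hr.2)
    (mt twinRel.symm hvy) hcover hxp (hB hp.mem hr.mem hpr) hyr.symm S.adj_y.symm S.adj_x hxr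
    (hA S.adj_x S.adj_y S.ne_xy) (mt Adj.symm hyp) (mt Adj.symm hp.1) (mt Adj.symm hr.1)
    (isClique_cls_of_adj hA S.adj_x S.not_twinRel_v_x) (isClique_cls_of_far hB hp)
    (isClique_cls_of_far hB hr) (isClique_cls_of_adj hA S.adj_y hvy) (isClique_cls_self hA hfar)
    hpy hpv hrv

theorem eq_x_or_eq_y_of_shared (S : Config G v x y) (hA : G.IsIndepSet (G.neighborSet v))
    (hB : G.IsClique {b | b ≠ v ∧ ¬ G.Adj v b}) (hp : Far G v p) (hxp : G.Adj x p)
    (hyp : ¬ G.Adj y p) (hr : Far G v r) (hxr : G.Adj x r) (hyr : G.Adj y r) (ha : G.Adj v a) :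
    a = x ∨ a = y := by
  by_contra! h
  obtain ⟨hax, hay⟩ := h
  obtain ⟨b, hb, hab⟩ :=
    S.exists_far_adj_of_isIndepSet hA (fun _ => far_of_isClique hB hp) hp ha
  have hra := (S.adj_of_adj_far ha hb hab hr (fun _ => hxr) fun _ => hyr).symm
  have hpr : p ≠ r := fun e => hyp (e ▸ hyr)
  have hrp : G.Adj r p := hB hr.mem hp.mem hpr.symm
  have hp₀ := S.not_mem_of_far hp hpr
  have ha₀ := not_mem_of_adj ha hax hay (hr.ne_of_adj ha)
  exact S.not_separated (.of_not_adj hp₀ hp.1 hxp)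
    (.of_adj ha₀ ha (hA S.adj_y ha (Ne.symm hay)))
    (.of_not_adj hp₀ hp.1 hrp) (.of_adj hp₀ hxp hyp)
    (.of_not_adj ha₀ (hA S.adj_x ha (Ne.symm hax)) hra) (.of_not_adj hp₀ hyp hrp)

theorem structG5_of_private_shared (S : Config G v x y) (hA : G.IsIndepSet (G.neighborSet v))
    (hB : G.IsClique {b | b ≠ v ∧ ¬ G.Adj v b}) (hp : Far G v p) (hxp : G.Adj x p)
    (hyp : ¬ G.Adj y p) (hr : Far G v r) (hxr : G.Adj x r) (hyr : G.Adj y r)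
    (hQ : ∀ b, Far G v b → G.Adj y b → G.Adj x b) : structG5 G := by
  have hfar : ∀ b, b ≠ v → ¬ G.Adj v b → Far G v b := fun _ => far_of_isClique hB hp
  have hnbr : ∀ {a}, G.Adj v a → a = x ∨ a = y :=
    S.eq_x_or_eq_y_of_shared hA hB hp hxp hyp hr hxr hyr
  have hpr : p ≠ r := fun e => hyp (e ▸ hyr)
  have hvy := S.swap.not_twinRel_v_x
  have hx : ∀ u, twinRel G x u → u = x := fun u h =>
    (hnbr (adj_of_twinRel S.adj_x S.not_twinRel_v_x h)).resolve_right
      fun e => S.not_twinRel_xy (e ▸ h)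
  have hy : ∀ u, twinRel G y u → u = y := fun u h =>
    (hnbr (adj_of_twinRel S.adj_y hvy h)).resolve_left fun e => S.not_twinRel_xy (e ▸ h).symm
  have hv : ∀ u, twinRel G v u → u = v := by
    intro u h
    by_contra hne
    rcases hnbr (adj_of_twinRel_self hfar h hne) with rfl | rfl
    exacts [S.not_twinRel_v_x h, hvy h]
  have hcover : ∀ u, twinRel G x u ∨ twinRel G p u ∨ twinRel G r u ∨ twinRel G y u ∨
      twinRel G v u := by
    intro u
    rcases eq_or_ne u v with rfl | huv
    · exact .inr <| .inr <| .inr <| .inr (.refl u)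
    by_cases hvu : G.Adj v u
    · rcases hnbr hvu with rfl | rfl
      exacts [.inl (.refl u), .inr <| .inr <| .inr <| .inl (.refl u)]
    · exact .inr <| (S.twinRel_of_far_of_shared hp hxp hyp hr hxr hyr hQ
        (hfar u huv hvu)).imp_right .inl
  exact structG5_of (v0 := x) (v1 := p) (v2 := r) (v3 := y) (v4 := v)
    (not_twinRel_of_adj_of_far S.adj_x hp) (not_twinRel_of_adj_of_far S.adj_x hr)
    S.not_twinRel_xy (mt twinRel.symm S.not_twinRel_v_x)
    (not_twinRel_of_not_adj (mt Adj.symm hyp) hyr.symm (hp.ne_of_adj S.adj_y))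
    (mt twinRel.symm (not_twinRel_of_adj_of_far S.adj_y hp)) (mt twinRel.symm hp.2)
    (mt twinRel.symm (not_twinRel_of_adj_of_far S.adj_y hr)) (mt twinRel.symm hr.2)
    (mt twinRel.symm hvy) hcover hxp (hB hp.mem hr.mem hpr) hyr.symm S.adj_y.symm S.adj_x hxr
    (mt Adj.symm hyp) (mt Adj.symm hp.1) (mt Adj.symm hr.1) (typeOne_cls hy) (typeOne_cls hv)
    (.inl (typeOne_cls hx)) (type1K_of_isClique (isClique_cls_of_far hB hp))
    (type1K_of_isClique (isClique_cls_of_far hB hr))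

theorem far_of_lonely (S : Config G v x y) (hp : Far G v p) (hxp : G.Adj x p)
    (hyp : ¬ G.Adj y p) (hr : Far G v r) (hyr : G.Adj y r) (hvz : G.Adj v z)
    (hz : ∀ b, Far G v b → ¬ G.Adj z b) (hbv : b ≠ v) (hvb : ¬ G.Adj v b) : Far G v b := by
  refine ⟨hvb, fun hb => ?_⟩
  have hp₀ := S.not_mem_of_far hp (hp.ne_of_adj hvz).symm
  have hr₀ := S.not_mem_of_far hr (hr.ne_of_adj hvz).symm
  have hb₀ := S.not_mem_of_not_adj hbv hvb fun e => hvb (e ▸ hvz)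
  exact S.not_separated (.of_not_adj hp₀ hp.1 hxp) (.of_not_adj hr₀ hr.1 hyr)
    (.of_not_adj hb₀ hvb (hb.adj_right hvz.symm fun e => hvb (e ▸ hvz)))
    (.of_adj hp₀ hxp hyp) (.of_adj hp₀ hxp (hz p hp)) (.of_adj hr₀ hyr (hz r hr))

theorem eq_of_twinRel_shared_of_lonely (S : Config G v x y) (hA : G.IsClique (G.neighborSet v))
    (hp : Far G v p) (hxp : G.Adj x p) (hyp : ¬ G.Adj y p) (hr : Far G v r) (hyr : G.Adj y r)
    (hvz : G.Adj v z) (hz : ∀ b, Far G v b → ¬ G.Adj z b) (hrr' : twinRel G r r') :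
    r' = r := by
  by_contra hr'r
  have hr' := hr.of_twinRel hrr'
  have hyr' := hrr'.adj_right hyr (hr'.ne_of_adj S.adj_y)
  have hzx : z ≠ x := fun e => hz p hp (e ▸ hxp)
  have hzy : z ≠ y := fun e => hz r hr (e ▸ hyr)
  have hrz : ¬ G.Adj r z := mt Adj.symm (hz r hr)
  have hp₀ := S.not_mem_of_far hp fun e => hyp (e ▸ hyr)
  have hr'₀ := S.not_mem_of_far hr' hr'r
  have hz₀ := not_mem_of_adj hvz hzx hzy (hr.ne_of_adj hvz)
  exact S.not_separated (.of_not_adj hp₀ hp.1 hxp) (.of_not_adj hr'₀ hr'.1 hyr')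
    (.of_adj hz₀ hvz hrz) (.of_adj hp₀ hxp hyp) (.of_adj hz₀ (hA S.adj_x hvz hzx.symm) hrz)
    (.of_adj hz₀ (hA S.adj_y hvz hzy.symm) hrz)

theorem eq_of_twinRel_private_of_lonely (S : Config G v x y) (hA : G.IsClique (G.neighborSet v))
    (hp : Far G v p) (hxp : G.Adj x p) (hyp : ¬ G.Adj y p) (hr : Far G v r) (hxr : G.Adj x r)
    (hyr : G.Adj y r) (hvz : G.Adj v z) (hz : ∀ b, Far G v b → ¬ G.Adj z b)
    (hpp' : twinRel G p p') : p' = p := by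
  by_contra hp'p
  have hp' := hp.of_twinRel hpp'
  have hxp' := hpp'.adj_right hxp (hp'.ne_of_adj S.adj_x)
  have hyp' := hpp'.not_adj_right hyp (hp.ne_of_adj S.adj_y)
  have hzx : z ≠ x := fun e => hz r hr (e ▸ hxr)
  have hzy : z ≠ y := fun e => hz r hr (e ▸ hyr)
  have hpz : ¬ G.Adj p z := mt Adj.symm (hz p hp)
  have hr₀ := S.not_mem_of_far (s := p) hr fun e => hyp (e ▸ hyr)
  have hp'₀ := S.not_mem_of_far hp' hp'p
  have hz₀ := not_mem_of_adj hvz hzx hzy (hp.ne_of_adj hvz)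
  exact S.not_separated (.of_not_adj hr₀ hr.1 hxr) (.of_not_adj hr₀ hr.1 hyr)
    (.of_adj hz₀ hvz hpz) (.of_adj hp'₀ hxp' hyp') (.of_adj hz₀ (hA S.adj_x hvz hzx.symm) hpz)
    (.of_adj hz₀ (hA S.adj_y hvz hzy.symm) hpz)

theorem structG7_of_private_shared (S : Config G v x y)
    (hB : G.IsIndepSet {b | b ≠ v ∧ ¬ G.Adj v b}) (hp : Far G v p) (hxp : G.Adj x p)
    (hyp : ¬ G.Adj y p) (hr : Far G v r) (hxr : G.Adj x r) (hyr : G.Adj y r)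
    (hQ : ∀ b, Far G v b → G.Adj y b → G.Adj x b) : structG7 G := by
  obtain ⟨z, hvz, hrz⟩ := exists_adj_not_adj_of_far hB hr
  have hz : ∀ b, Far G v b → ¬ G.Adj z b := fun b hb hzb =>
    hrz (S.adj_of_adj_far hvz hb hzb hr (fun _ => hxr) fun _ => hyr).symm
  have hfar : ∀ b, b ≠ v → ¬ G.Adj v b → Far G v b :=
    fun _ => S.far_of_lonely hp hxp hyp hr hyr hvz hz
  have hA : G.IsClique (G.neighborSet v) := S.nbrs.resolve_right fun hA =>
    let ⟨b, hb, hzb⟩ := S.exists_far_adj_of_isIndepSet hA hfar hp hvz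
    hz b hb hzb
  have hvy := S.swap.not_twinRel_v_x
  have hP : ∀ u, twinRel G p u → u = p :=
    fun _ => S.eq_of_twinRel_private_of_lonely hA hp hxp hyp hr hxr hyr hvz hz
  have hR : ∀ u, twinRel G r u → u = r :=
    fun _ => S.eq_of_twinRel_shared_of_lonely hA hp hxp hyp hr hyr hvz hz
  have hcover : ∀ u, twinRel G x u ∨ twinRel G y u ∨ twinRel G v u ∨ twinRel G r u ∨
      twinRel G p u := by
    intro u
    rcases S.twinRel_cases hA hfar u with h | h | h | hu
    · exact .inr <| .inr <| .inl h
    · exact .inl h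
    · exact .inr <| .inl h
    · rcases S.twinRel_of_far_of_shared hp hxp hyp hr hxr hyr hQ hu with h | h
      exacts [.inr <| .inr <| .inr <| .inr h, .inr <| .inr <| .inr <| .inl h]
  exact structG7_of (a := x) (b := y) (c := v) (d := r) (l := p) S.not_twinRel_xy
    (mt twinRel.symm S.not_twinRel_v_x) (not_twinRel_of_adj_of_far S.adj_x hr)
    (not_twinRel_of_adj_of_far S.adj_x hp) (mt twinRel.symm hvy)
    (not_twinRel_of_adj_of_far S.adj_y hr) (not_twinRel_of_adj_of_far S.adj_y hp) hr.2 hp.2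
    (not_twinRel_of_adj hyr.symm (mt Adj.symm hyp) (hp.ne_of_adj S.adj_y)) hcover
    (hA S.adj_x S.adj_y S.ne_xy) S.adj_x.symm hxr S.adj_y.symm hyr hxp hr.1 hyp hp.1
    (hB hr.mem hp.mem fun e => hyp (e ▸ hyr)) (typeOne_cls hP)
    (type1K_of_isClique (isClique_cls_of_adj hA S.adj_x S.not_twinRel_v_x))
    (type1K_of_isClique (isClique_cls_of_adj hA S.adj_y hvy))
    (typeK_cls (isClique_cls_self hA hfar) (twinRel_of_forall_far_not_adj hA hfar hvz hz)
      (G.ne_of_adj hvz).symm)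
    (typeOne_cls hR)

theorem twinRel_of_far_of_private (S : Config G v x y) (hp : Far G v p) (hxp : G.Adj x p)
    (hyp : ¬ G.Adj y p) (hq : Far G v q) (hyq : G.Adj y q) (hxq : ¬ G.Adj x q)
    (hR : ∀ b, Far G v b → G.Adj x b → ¬ G.Adj y b) (hu : Far G v u) :
    twinRel G p u ∨ twinRel G q u := by
  by_cases hxu : G.Adj x u
  · exact .inl (S.twinRel_of_far hp hu (iff_of_true hxp hxu) (iff_of_false hyp (hR u hu hxu)))
  · have hyu := (S.adj_x_or_adj_y hu).resolve_left hxu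
    exact .inr (S.twinRel_of_far hq hu (iff_of_false hxq hxu) (iff_of_true hyq hyu))

theorem eq_of_twinRel_private_of_private (S : Config G v x y)
    (hB : G.IsClique {b | b ≠ v ∧ ¬ G.Adj v b}) (hp : Far G v p) (hxp : G.Adj x p)
    (hyp : ¬ G.Adj y p) (hq : Far G v q) (hyq : G.Adj y q) (hxq : ¬ G.Adj x q)
    (hpp' : twinRel G p p') : p' = p := by
  by_contra hp'p
  have hp' := hp.of_twinRel hpp'
  have hxp' := hpp'.adj_right hxp (hp'.ne_of_adj S.adj_x)
  have hyp' := hpp'.not_adj_right hyp (hp.ne_of_adj S.adj_y)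
  have hpq : p ≠ q := fun e => hxq (e ▸ hxp)
  have hq₀ := S.not_mem_of_far hq hpq.symm
  have hp'₀ := S.not_mem_of_far hp' hp'p
  have hpq' : G.Adj p q := hB hp.mem hq.mem hpq
  exact S.not_separated (.of_not_adj hp'₀ hp'.1 hxp') (.of_not_adj hq₀ hq.1 hyq)
    (.of_not_adj hq₀ hq.1 hpq') (.of_not_adj hq₀ hxq hyq) (.of_not_adj hq₀ hxq hpq')
    (.of_not_adj hp'₀ hyp' (hB hp.mem hp'.mem (Ne.symm hp'p)))

theorem eq_x_of_twinRel_of_private (S : Config G v x y) (hA : G.IsIndepSet (G.neighborSet v))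
    (hB : G.IsClique {b | b ≠ v ∧ ¬ G.Adj v b}) (hp : Far G v p) (hxp : G.Adj x p)
    (hq : Far G v q) (hyq : G.Adj y q) (hxq : ¬ G.Adj x q) (h : twinRel G x x') : x' = x := by
  by_contra hx'x
  have hvx' := adj_of_twinRel S.adj_x S.not_twinRel_v_x h
  have hx'y : x' ≠ y := fun e => S.not_twinRel_xy (e ▸ h)
  have hpq : p ≠ q := fun e => hxq (e ▸ hxp)
  have hpq' : G.Adj p q := hB hp.mem hq.mem hpq
  have hq₀ := S.not_mem_of_far hq hpq.symm
  have hx'₀ := not_mem_of_adj hvx' hx'x hx'y (hp.ne_of_adj hvx')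
  exact S.not_separated (.of_adj hx'₀ hvx' (hA S.adj_x hvx' (Ne.symm hx'x)))
    (.of_not_adj hq₀ hq.1 hyq) (.of_not_adj hq₀ hq.1 hpq') (.of_not_adj hq₀ hxq hyq)
    (.of_not_adj hq₀ hxq hpq')
    (.of_not_adj hx'₀ (hA S.adj_y hvx' (Ne.symm hx'y))
      (h.adj_right hxp.symm (hp.ne_of_adj hvx').symm))

theorem structG5_of_private_private (S : Config G v x y) (hA : G.IsClique (G.neighborSet v))
    (hB : G.IsClique {b | b ≠ v ∧ ¬ G.Adj v b}) (hp : Far G v p) (hxp : G.Adj x p)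
    (hyp : ¬ G.Adj y p) (hq : Far G v q) (hyq : G.Adj y q) (hxq : ¬ G.Adj x q)
    (hR : ∀ b, Far G v b → G.Adj x b → ¬ G.Adj y b) : structG5 G := by
  have hfar : ∀ b, b ≠ v → ¬ G.Adj v b → Far G v b := fun _ => far_of_isClique hB hp
  have hvy := S.swap.not_twinRel_v_x
  have hP : ∀ u, twinRel G p u → u = p :=
    fun _ => S.eq_of_twinRel_private_of_private hB hp hxp hyp hq hyq hxq
  have hQ : ∀ u, twinRel G q u → u = q :=
    fun _ => S.swap.eq_of_twinRel_private_of_private hB hq hyq hxq hp hxp hyp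
  have hcover : ∀ u, twinRel G x u ∨ twinRel G v u ∨ twinRel G y u ∨ twinRel G q u ∨
      twinRel G p u := by
    intro u
    rcases S.twinRel_cases hA hfar u with h | h | h | hu
    · exact .inr <| .inl h
    · exact .inl h
    · exact .inr <| .inr <| .inl h
    · rcases S.twinRel_of_far_of_private hp hxp hyp hq hyq hxq hR hu with h | h
      exacts [.inr <| .inr <| .inr <| .inr h, .inr <| .inr <| .inr <| .inl h]
  exact structG5_of (v0 := x) (v1 := v) (v2 := y) (v3 := q) (v4 := p)
    (mt twinRel.symm S.not_twinRel_v_x) S.not_twinRel_xy (not_twinRel_of_adj_of_far S.adj_x hq)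
    (not_twinRel_of_adj_of_far S.adj_x hp) hvy hq.2 hp.2 (not_twinRel_of_adj_of_far S.adj_y hq)
    (not_twinRel_of_adj_of_far S.adj_y hp)
    (not_twinRel_of_adj hyq.symm (mt Adj.symm hyp) (hp.ne_of_adj S.adj_y)) hcover
    S.adj_x.symm S.adj_y hyq (hB hq.mem hp.mem fun e => hxq (e ▸ hxp)) hxp.symm
    (hA S.adj_x S.adj_y S.ne_xy) hq.1 hp.1 hyp (typeOne_cls hQ) (typeOne_cls hP)
    (type1K_of_isClique (isClique_cls_of_adj hA S.adj_x S.not_twinRel_v_x))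
    (type1K_of_isClique (isClique_cls_self hA hfar))
    (type1K_of_isClique (isClique_cls_of_adj hA S.adj_y hvy))

theorem structG4_of_private_private (S : Config G v x y) (hA : G.IsIndepSet (G.neighborSet v))
    (hB : G.IsClique {b | b ≠ v ∧ ¬ G.Adj v b}) (hp : Far G v p) (hxp : G.Adj x p)
    (hyp : ¬ G.Adj y p) (hq : Far G v q) (hyq : G.Adj y q) (hxq : ¬ G.Adj x q)
    (hR : ∀ b, Far G v b → G.Adj x b → ¬ G.Adj y b) : structG4 G := by
  have hfar : ∀ b, b ≠ v → ¬ G.Adj v b → Far G v b := fun _ => far_of_isClique hB hp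
  have hvy := S.swap.not_twinRel_v_x
  have hx : ∀ u, twinRel G x u → u = x :=
    fun _ => S.eq_x_of_twinRel_of_private hA hB hp hxp hq hyq hxq
  have hy : ∀ u, twinRel G y u → u = y :=
    fun _ => S.swap.eq_x_of_twinRel_of_private hA hB hq hyq hp hxp hyp
  have hnbr : ∀ {a}, G.Adj v a → a = x ∨ a = y := fun ha =>
    let ⟨_, hb, hab⟩ := S.exists_far_adj_of_isIndepSet hA hfar hp ha
    (S.twinRel_of_adj_far ha hb hab).imp (hx _) (hy _)
  have hv : ∀ u, twinRel G v u → u = v := by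
    intro u h
    by_contra hne
    rcases hnbr (adj_of_twinRel_self hfar h hne) with rfl | rfl
    exacts [S.not_twinRel_v_x h, hvy h]
  have hP : ∀ u, twinRel G p u → u = p :=
    fun _ => S.eq_of_twinRel_private_of_private hB hp hxp hyp hq hyq hxq
  have hQ : ∀ u, twinRel G q u → u = q :=
    fun _ => S.swap.eq_of_twinRel_private_of_private hB hq hyq hxq hp hxp hyp
  have hcover : ∀ u, twinRel G v u ∨ twinRel G x u ∨ twinRel G p u ∨ twinRel G q u ∨
      twinRel G y u := by
    intro u
    rcases eq_or_ne u v with rfl | huv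
    · exact .inl (.refl u)
    by_cases hvu : G.Adj v u
    · rcases hnbr hvu with rfl | rfl
      exacts [.inr <| .inl (.refl u), .inr <| .inr <| .inr <| .inr (.refl u)]
    · exact .inr <| .inr <| (S.twinRel_of_far_of_private hp hxp hyp hq hyq hxq hR
        (hfar u huv hvu)).imp_right .inl
  exact structG4_of (v0 := v) (v1 := x) (v2 := p) (v3 := q) (v4 := y) S.not_twinRel_v_x hp.2
    hq.2 hvy (not_twinRel_of_adj_of_far S.adj_x hp) (not_twinRel_of_adj_of_far S.adj_x hq)
    S.not_twinRel_xy (not_twinRel_of_adj hxp.symm (mt Adj.symm hxq) (hq.ne_of_adj S.adj_x))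
    (mt twinRel.symm (not_twinRel_of_adj_of_far S.adj_y hp))
    (mt twinRel.symm (not_twinRel_of_adj_of_far S.adj_y hq)) hcover S.adj_x hxp
    (hB hp.mem hq.mem fun e => hxq (e ▸ hxp)) hyq.symm S.adj_y.symm hp.1 hxq (mt Adj.symm hyp)
    (mt Adj.symm hq.1) (hA S.adj_y S.adj_x S.ne_xy.symm) (typeOne_cls hv) (typeOne_cls hx)
    (typeOne_cls hP) (typeOne_cls hQ) (typeOne_cls hy)

theorem structures_of_private (S : Config G v x y) (hp : Far G v p) (hxp : G.Adj x p)
    (hyp : ¬ G.Adj y p) : structG4 G ∨ structG5 G ∨ structG6 G ∨ structG7 G := by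
  by_cases hr : ∃ r, Far G v r ∧ G.Adj x r ∧ G.Adj y r
  · obtain ⟨r, hr, hxr, hyr⟩ := hr
    have hQ : ∀ b, Far G v b → G.Adj y b → G.Adj x b := fun b hb hyb => by
      by_contra hxb
      exact S.false_of_private_private_shared hp hxp hyp hb hyb hxb hr hxr hyr
    rcases S.nonNbrs with hB | hB
    · rcases S.nbrs with hA | hA
      · exact .inr <| .inr <| .inl (S.structG6_of_private_shared hA hB hp hxp hyp hr hxr hyr hQ)
      · exact .inr <| .inl (S.structG5_of_private_shared hA hB hp hxp hyp hr hxr hyr hQ)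
    · exact .inr <| .inr <| .inr (S.structG7_of_private_shared hB hp hxp hyp hr hxr hyr hQ)
  · push Not at hr
    obtain ⟨q, hq, hyq⟩ := S.exists_far_y
    have hxq : ¬ G.Adj x q := fun hxq => hr q hq hxq hyq
    have hB := isClique_of_adj S.nonNbrs hp.mem hq.mem (S.adj_of_private hp hxp hyp hq hxq)
    rcases S.nbrs with hA | hA
    · exact .inr <| .inl (S.structG5_of_private_private hA hB hp hxp hyp hq hyq hxq hr)
    · exact .inl (S.structG4_of_private_private hA hB hp hxp hyp hq hyq hxq hr)

theorem structures (S : Config G v x y) :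
    structG4 G ∨ structG5 G ∨ structG6 G ∨ structG7 G := by
  obtain ⟨p, hp, ⟨hxp, hyp⟩ | ⟨hyp, hxp⟩⟩ := S.exists_private
  · exact S.structures_of_private hp hxp hyp
  · exact S.swap.structures_of_private hp hyp hxp

end Config

section DiameterTwo

variable {G : SimpleGraph V} {u w v a b : V}

theorem exists_adj_adj_of_dist_le_two (hc : G.Connected) (h2 : ∀ a b, G.dist a b ≤ 2)
    (hne : u ≠ w) (hn : ¬ G.Adj u w) : ∃ t, G.Adj u t ∧ G.Adj t w := by
  have hd : G.dist u w = 2 := le_antisymm (h2 u w) (hc.one_lt_dist_of_ne_of_not_adj hne hn)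
  have he : G.edist u w = 2 := by rw [← (hc.preconnected u w).coe_dist_eq_edist, hd]; rfl
  obtain ⟨t, ht⟩ := (edist_eq_two_iff.1 he).2.2
  rw [mem_commonNeighbors] at ht
  exact ⟨t, ht.1, ht.2.symm⟩

theorem Gamma_one : Gamma G 1 v = G.neighborSet v :=
  Set.ext fun _ => dist_eq_one_iff_adj.trans (G.adj_comm _ _)

theorem Gamma_two (hc : G.Connected) (h2 : ∀ a b, G.dist a b ≤ 2) :
    Gamma G 2 v = {b | b ≠ v ∧ ¬ G.Adj v b} := by
  ext u
  refine ⟨fun (h : G.dist u v = 2) => ⟨fun e => ?_, fun hvu => ?_⟩,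
    fun ⟨huv, hvu⟩ => ?_⟩
  · simp [e] at h
  · simp [dist_eq_one_iff_adj.2 hvu.symm] at h
  · exact le_antisymm (h2 u v) (hc.one_lt_dist_of_ne_of_not_adj huv (mt Adj.symm hvu))

theorem Homogeneous.isClique_or_isIndepSet {T : Set V} (h : Homogeneous G T) :
    G.IsClique T ∨ G.IsIndepSet T :=
  h.imp (fun h _ ha _ hb => h _ ha _ hb) fun h _ ha _ hb _ => h _ ha _ hb

theorem cls_mem_GammaStar_one : cls G a ∈ GammaStar G 1 v ↔ ¬ twinRel G a v ∧ G.Adj a v :=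
  dist_eq_one_iff_adj.trans twinGraph_adj_cls

theorem cls_mem_GammaStar_two (hc : G.Connected) (h2 : ∀ a b, G.dist a b ≤ 2) :
    cls G b ∈ GammaStar G 2 v ↔ Far G v b := by
  refine ⟨fun (h : (twinGraph G).dist (cls G b) (cls G v) = 2) =>
    ⟨fun hvb => ?_, fun hvb => ?_⟩, fun hb => ?_⟩
  · by_cases hbv : twinRel G b v
    · rw [cls_eq_cls.2 hbv, dist_self] at h
      exact absurd h (by norm_num)
    · rw [dist_eq_one_iff_adj.2 (twinGraph_adj_cls.2 ⟨hbv, hvb.symm⟩)] at h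
      exact absurd h (by norm_num)
  · rw [cls_eq_cls.2 hvb.symm, dist_self] at h
    exact absurd h (by norm_num)
  obtain ⟨t, hvt, htb⟩ := exists_adj_adj_of_dist_le_two hc h2 hb.ne.symm hb.1
  have he : (twinGraph G).edist (cls G b) (cls G v) = 2 := by
    refine edist_eq_two_iff.2 ⟨cls_ne_cls (mt twinRel.symm hb.2),
      not_twinGraph_adj_cls (mt Adj.symm hb.1), cls G t, ?_⟩
    rw [mem_commonNeighbors]
    exact ⟨twinGraph_adj_cls_of_adj (mt twinRel.symm (not_twinRel_of_adj_of_far hvt hb)) htb.symm,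
      twinGraph_adj_cls_of_adj (not_twinRel_of_far_adj hb htb) hvt⟩
  show ((twinGraph G).edist (cls G b) (cls G v)).toNat = 2
  rw [he]
  rfl

theorem cls_mem_R1Star (hc : G.Connected) (h2 : ∀ a b, G.dist a b ≤ 2) :
    cls G a ∈ R1Star G v ↔ G.Adj v a ∧ ∃ b, Far G v b ∧ G.Adj a b := by
  refine ⟨fun ⟨h1, B, hB, hAB⟩ => ?_, fun ⟨ha, b, hb, hab⟩ => ?_⟩
  · obtain ⟨b, rfl⟩ := cls_surjective B
    exact ⟨(cls_mem_GammaStar_one.1 h1).2.symm, b, (cls_mem_GammaStar_two hc h2).1 hB,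
      (twinGraph_adj_cls.1 hAB).2⟩
  · exact ⟨cls_mem_GammaStar_one.2
      ⟨mt twinRel.symm (not_twinRel_of_far_adj hb hab), ha.symm⟩,
      cls G b, (cls_mem_GammaStar_two hc h2).2 hb,
      twinGraph_adj_cls_of_adj (not_twinRel_of_adj_of_far ha hb) hab⟩

theorem exists_config [Fintype V] (hc : G.Connected) (h2 : ∀ a b, G.dist a b ≤ 2)
    (hβ : metricDim G = Fintype.card V - 3) (hA : Homogeneous G (Gamma G 1 v))
    (hB : Homogeneous G (Gamma G 2 v)) (hR : (R1Star G v).ncard = 2) :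
    ∃ x y, Config G v x y := by
  obtain ⟨X, Y, hXY, hR⟩ := Set.ncard_eq_two.1 hR
  obtain ⟨x, rfl⟩ := cls_surjective X
  obtain ⟨y, rfl⟩ := cls_surjective Y
  have hmem : cls G x ∈ R1Star G v ∧ cls G y ∈ R1Star G v := by simp [hR]
  have hx := (cls_mem_R1Star hc h2).1 hmem.1
  have hy := (cls_mem_R1Star hc h2).1 hmem.2
  refine ⟨x, y, exists_adj_adj_of_dist_le_two hc h2, false_of_separated_four hc hβ,
    Gamma_one ▸ hA.isClique_or_isIndepSet, Gamma_two hc h2 ▸ hB.isClique_or_isIndepSet, hx.1,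
    hy.1, mt cls_eq_cls.2 hXY, hx.2, hy.2, fun ha hb hab => ?_⟩
  have h := (cls_mem_R1Star hc h2).2 ⟨ha, _, hb, hab⟩
  rw [hR, Set.mem_insert_iff, Set.mem_singleton_iff, cls_eq_cls, cls_eq_cls] at h
  exact h.imp twinRel.symm twinRel.symm

end DiameterTwo

theorem structures_of_R1Star_card_two_homogeneous_general
    {V : Type*} [Fintype V] (G : SimpleGraph V)
    (hdiam : diamEq G 2)
    (hbeta : metricDim G = Fintype.card V - 3)
    (v : V)
    (hhom : Homogeneous G (Gamma G 1 v))
    (hR1 : (R1Star G v).ncard = 2)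
    (hhom2 : Homogeneous G (Gamma G 2 v)) :
    structG4 G ∨ structG5 G ∨ structG6 G ∨ structG7 G := by
  obtain ⟨hc, h2, -⟩ := hdiam
  obtain ⟨x, y, S⟩ := exists_config hc h2 hbeta hhom hhom2 hR1
  exact S.structures

/-- If `G` is connected of order `n`, `diam(G) = 2`, `β(G) = n - 3`, `v` is a
vertex with `Γ_2^*(v^*) ≠ ∅` and `Γ_1(v)` homogeneous, `|R_1^*(v^*)| = 2`, and
`Γ_2(v)` is homogeneous, then the twin graph satisfies one of the structures
`G_4`, `G_5`, `G_6`, `G_7`. -/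
theorem structures_of_R1Star_card_two_homogeneous
    {V : Type*} [Fintype V] (G : SimpleGraph V)
    (hdiam : diamEq G 2)
    (hbeta : metricDim G = Fintype.card V - 3)
    (v : V) (h2 : (GammaStar G 2 v).Nonempty)
    (hhom : Homogeneous G (Gamma G 1 v))
    (hR1 : (R1Star G v).ncard = 2)
    (hhom2 : Homogeneous G (Gamma G 2 v)) :
    structG4 G ∨ structG5 G ∨ structG6 G ∨ structG7 G :=
  structures_of_R1Star_card_two_homogeneous_general G hdiam hbeta v hhom hR1 hhom2

end PaperMetricDim
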